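/- The dynamic programming recurrence for optimal consecutive clustering is correct: defining opt'(j,i) as the minimum cost of a partition of vertices 0..j into consecutive intervals whose last part is {j-i,...,j}, it satisfies opt'(j,0) = opt(j-1) + Σ_{k=0}^{j-1} w⁺(j,k) and opt'(j,i) = opt'(j-1,i-1) + Σ_{k=0}^{j-1} w⁺(j,k) - Σ_{k=j-i}^{j-1} w⁺(j,k) + Σ_{k=j-i}^{j-1} w⁻(j,k) for 0 < i ≤ j, where opt(j) = min_{0 ≤ i ≤ j} opt'(j,i). -/

import Mathlib

open Finset

def samePartN {s : Finset ℕ} (P : Finpartition s) (a b : ℕ) : Prop :=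
  ∃ t ∈ P.parts, a ∈ t ∧ b ∈ t

instance {s : Finset ℕ} (P : Finpartition s) (a b : ℕ) : Decidable (samePartN P a b) := by
  unfold samePartN; infer_instance

/-- A partition into sets of consecutive integers. -/
def IsConsecPartition {s : Finset ℕ} (P : Finpartition s) : Prop :=
  ∀ t ∈ P.parts, ∀ a ∈ t, ∀ b ∈ t, ∀ c, a ≤ c → c ≤ b → c ∈ t

/-- Weighted editing cost of a partition: `w⁻` for same-part pairs, `w⁺` for
cross-part pairs. -/
noncomputable def pcost (w : ℕ → ℕ → ℝ) (s : Finset ℕ) (P : Finpartition s) : ℝ :=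
  ∑ b ∈ s, ∑ a ∈ s.filter (· < b),
    if samePartN P a b then max (-w a b) 0 else max (w a b) 0

/-- `opt' w j i`: minimum cost of a consecutive partition of `{0,…,j}` whose last
part is `{j-i,…,j}`. -/
noncomputable def opt' (w : ℕ → ℕ → ℝ) (j i : ℕ) : ℝ :=
  sInf ((fun P => pcost w (Finset.range (j + 1)) P) ''
    {P | IsConsecPartition P ∧ Finset.Icc (j - i) j ∈ P.parts})

/-- `opt w j`: minimum cost of a consecutive partition of `{0,…,j}`. -/
noncomputable def opt (w : ℕ → ℕ → ℝ) (j : ℕ) : ℝ :=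
  sInf ((fun P => pcost w (Finset.range (j + 1)) P) '' {P | IsConsecPartition P})


/-!
Removing the last block `{m,…,n}` of a consecutive partition of `{0,…,n}` leaves an arbitrary
consecutive partition of `{0,…,m-1}`, and the cost splits as the cost of the remainder plus a
term `blockCost w m (n+1)` that depends only on `m` and `n`. Hence
`opt' w n (n-m) = optRange w m + blockCost w m (n+1)`, where `optRange w m` is the optimum on
`{0,…,m-1}`. Both recurrences are then identities between the `blockCost` terms, and the formula
for `opt` holds because every consecutive partition has some last block `{m,…,n}`.
-/

lemma isConsecPartition_iff_of_parts_eq_insert {s t : Finset ℕ} {P : Finpartition s}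
    {R : Finpartition t} {m n : ℕ} (h : P.parts = insert (Icc m n) R.parts) :
    IsConsecPartition P ↔ IsConsecPartition R := by
  simp only [IsConsecPartition, h, forall_mem_insert, and_iff_right_iff_imp]
  intro _ a ha b hb c hac hcb
  simp only [mem_Icc] at ha hb ⊢
  omega

lemma isConsecPartition_bot (s : Finset ℕ) : IsConsecPartition (⊥ : Finpartition s) := by
  intro t ht a ha b hb c hac hcb
  obtain ⟨x, -, rfl⟩ := Finpartition.mem_bot_iff.1 ht
  simp only [mem_singleton] at ha hb ⊢
  omega

lemma exists_Icc_mem_parts {n : ℕ} {P : Finpartition (range (n + 1))}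
    (hP : IsConsecPartition P) : ∃ m ≤ n, Icc m n ∈ P.parts := by
  obtain ⟨t, ht, hnt⟩ := P.exists_mem (self_mem_range_succ n)
  refine ⟨t.min' ⟨n, hnt⟩, t.min'_le n hnt, ?_⟩
  convert ht using 1
  ext x
  refine ⟨fun hx => hP t ht _ (t.min'_mem _) n hnt x (mem_Icc.1 hx).1 (mem_Icc.1 hx).2,
    fun hx => mem_Icc.2 ⟨t.min'_le x hx, Nat.lt_succ_iff.1 (mem_range.1 (P.subset ht hx))⟩⟩

section LastBlock

variable {m n : ℕ} {P : Finpartition (range (n + 1))} {R : Finpartition (range m)}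

lemma samePartN_iff_of_lt (h : P.parts = insert (Icc m n) R.parts) {a b : ℕ} (ha : a < m) :
    samePartN P a b ↔ samePartN R a b := by
  simp only [samePartN, h, exists_mem_insert, mem_Icc, or_iff_right_iff_imp]
  omega

lemma samePartN_iff_le_of_mem_Icc (h : P.parts = insert (Icc m n) R.parts) {a b : ℕ}
    (hb : b ∈ Icc m n) (hab : a < b) : samePartN P a b ↔ m ≤ a := by
  have hI : Icc m n ∈ P.parts := h ▸ mem_insert_self _ _
  constructor
  · rintro ⟨t, ht, hat, hbt⟩
    rw [P.eq_of_mem_parts ht hI hbt hb] at hat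
    exact (mem_Icc.1 hat).1
  · intro hma
    exact ⟨_, hI, mem_Icc.2 ⟨hma, by grind⟩, hb⟩

end LastBlock

variable (w : ℕ → ℕ → ℝ)

lemma pcost_range {k : ℕ} (P : Finpartition (range k)) :
    pcost w (range k) P = ∑ b ∈ range k, ∑ a ∈ range b,
      if samePartN P a b then max (-w a b) 0 else max (w a b) 0 := by
  refine sum_congr rfl fun b hb => ?_
  congr 1
  ext a
  simp only [mem_filter, mem_range] at hb ⊢
  omega

lemma pcost_nonneg {s : Finset ℕ} (P : Finpartition s) : 0 ≤ pcost w s P :=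
  sum_nonneg fun _ _ => sum_nonneg fun _ _ => by split_ifs <;> exact le_max_right _ _

lemma bddBelow_image_pcost (s : Finset ℕ) (A : Set (Finpartition s)) :
    BddBelow (pcost w s '' A) :=
  ⟨0, by rintro _ ⟨P, -, rfl⟩; exact pcost_nonneg w P⟩

/-- The cost of the pairs `a < b` with `m ≤ b < k`, when `{m,…,k-1}` is a block. -/
noncomputable def blockCost (m k : ℕ) : ℝ :=
  ∑ b ∈ Ico m k, ∑ a ∈ range b, if m ≤ a then max (-w a b) 0 else max (w a b) 0

lemma blockCost_self (m : ℕ) : blockCost w m m = 0 := by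
  simp [blockCost]

lemma blockCost_succ {m k : ℕ} (h : m ≤ k) :
    blockCost w m (k + 1) = blockCost w m k
      + ∑ a ∈ range k, if m ≤ a then max (-w a k) 0 else max (w a k) 0 :=
  sum_Ico_succ_top h _

lemma pcost_eq_add_blockCost {m n : ℕ} {P : Finpartition (range (n + 1))}
    {R : Finpartition (range m)} (h : P.parts = insert (Icc m n) R.parts) :
    pcost w (range (n + 1)) P = pcost w (range m) R + blockCost w m (n + 1) := by
  have hmn : m ≤ n :=
    nonempty_Icc.1 (P.nonempty_of_mem_parts (h ▸ mem_insert_self _ _))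
  rw [pcost_range, pcost_range, ← sum_range_add_sum_Ico _ (by omega : m ≤ n + 1)]
  refine congrArg₂ (· + ·) (sum_congr rfl fun b hb => ?_) (sum_congr rfl fun b hb => ?_)
  · refine sum_congr rfl fun a ha => ?_
    exact if_congr (samePartN_iff_of_lt h (by grind)) rfl rfl
  · refine sum_congr rfl fun a ha => ?_
    exact if_congr (samePartN_iff_le_of_mem_Icc h (by grind) (mem_range.1 ha))
      rfl rfl

noncomputable def appendBlock {m n : ℕ} (hmn : m ≤ n) (R : Finpartition (range m)) :
    Finpartition (range (n + 1)) :=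
  R.extend (b := Icc m n) (by simpa [← nonempty_iff_ne_empty] using hmn)
    (disjoint_left.2 fun x hx hx' => by grind)
    (by ext x; simp only [sup_eq_union, mem_union, mem_range, mem_Icc]; omega)

def dropBlock {m n : ℕ} (P : Finpartition (range (n + 1))) (hP : Icc m n ∈ P.parts) :
    Finpartition (range m) :=
  P.ofSubset (erase_subset (Icc m n) P.parts) <| by
    ext x
    simp only [sup_eq_biUnion, mem_biUnion, mem_erase, id, mem_range]
    constructor
    · rintro ⟨t, ⟨hne, ht⟩, hxt⟩
      have hx := mem_range.1 (P.subset ht hxt)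
      by_contra hxm
      have hxI : x ∈ Icc m n := mem_Icc.2 ⟨by omega, by omega⟩
      exact disjoint_left.1 (P.disjoint ht hP hne) hxt hxI
    · intro hxm
      have hmn := nonempty_Icc.1 (P.nonempty_of_mem_parts hP)
      obtain ⟨t, ht, hxt⟩ := P.exists_mem (mem_range.2 (by omega : x < n + 1))
      refine ⟨t, ⟨fun hte => ?_, ht⟩, hxt⟩
      rw [hte, mem_Icc] at hxt
      omega

lemma image_pcost_of_Icc_mem {m n : ℕ} (hmn : m ≤ n) :
    pcost w (range (n + 1)) '' {P | IsConsecPartition P ∧ Icc m n ∈ P.parts}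
      = (· + blockCost w m (n + 1)) '' (pcost w (range m) '' {R | IsConsecPartition R}) := by
  rw [Set.image_image]
  ext x
  constructor
  · rintro ⟨P, ⟨hPc, hP⟩, rfl⟩
    have h : P.parts = insert (Icc m n) (dropBlock P hP).parts := (insert_erase hP).symm
    exact ⟨dropBlock P hP, (isConsecPartition_iff_of_parts_eq_insert h).1 hPc,
      (pcost_eq_add_blockCost w h).symm⟩
  · rintro ⟨R, hRc, rfl⟩
    have h : (appendBlock hmn R).parts = insert (Icc m n) R.parts := rfl
    exact ⟨appendBlock hmn R, ⟨(isConsecPartition_iff_of_parts_eq_insert h).2 hRc,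
      h ▸ mem_insert_self _ _⟩, pcost_eq_add_blockCost w h⟩

noncomputable def optRange (m : ℕ) : ℝ :=
  sInf (pcost w (range m) '' {R | IsConsecPartition R})

lemma opt_eq_optRange (j : ℕ) : opt w j = optRange w (j + 1) := rfl

lemma opt'_eq_optRange_add_blockCost (j i : ℕ) :
    opt' w j i = optRange w (j - i) + blockCost w (j - i) (j + 1) := by
  have hne : (pcost w (range (j - i)) '' {R | IsConsecPartition R}).Nonempty :=
    ⟨_, ⊥, isConsecPartition_bot _, rfl⟩
  rw [opt', image_pcost_of_Icc_mem w (j.sub_le i)]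
  exact ((OrderIso.addRight _).map_csInf' hne (bddBelow_image_pcost w _ _)).symm

lemma opt_le_opt' (j i : ℕ) : opt w j ≤ opt' w j i := by
  have hne : (pcost w (range (j + 1)) ''
      {P | IsConsecPartition P ∧ Icc (j - i) j ∈ P.parts}).Nonempty := by
    rw [image_pcost_of_Icc_mem w (j.sub_le i)]
    exact ⟨_, _, ⟨⊥, isConsecPartition_bot _, rfl⟩, rfl⟩
  exact csInf_le_csInf (bddBelow_image_pcost w _ _) hne (Set.image_mono fun P hP => hP.1)

lemma opt_eq_inf'_opt' (j : ℕ) :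
    opt w j = (range (j + 1)).inf' nonempty_range_add_one (fun i => opt' w j i) := by
  refine le_antisymm (le_inf' _ _ fun i _ => opt_le_opt' w j i) ?_
  refine le_csInf ⟨_, ⊥, isConsecPartition_bot _, rfl⟩ ?_
  rintro _ ⟨P, hP, rfl⟩
  obtain ⟨m, hmj, hm⟩ := exists_Icc_mem_parts hP
  calc (range (j + 1)).inf' nonempty_range_add_one (fun i => opt' w j i)
      ≤ opt' w j (j - m) := inf'_le _ (mem_range.2 (by omega))
    _ ≤ pcost w (range (j + 1)) P :=
        csInf_le (bddBelow_image_pcost w _ _) ⟨P, ⟨hP, by rwa [Nat.sub_sub_self hmj]⟩, rfl⟩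

lemma sum_range_ite_le {f g : ℕ → ℝ} {m j : ℕ} (hmj : m ≤ j) :
    ∑ a ∈ range j, (if m ≤ a then g a else f a)
      = ∑ a ∈ range j, f a - ∑ a ∈ Ico m j, f a + ∑ a ∈ Ico m j, g a := by
  rw [← sum_range_add_sum_Ico _ hmj, ← sum_range_add_sum_Ico _ hmj,
    sum_congr rfl fun a ha => if_neg (by grind),
    sum_congr rfl fun a ha => if_pos (mem_Ico.1 ha).1]
  ring

theorem dp_recurrence_correct_general (w : ℕ → ℕ → ℝ) (hw : ∀ a b, w a b = w b a) (j i : ℕ)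
    (hj : 1 ≤ j) :
    opt' w j 0 = opt w (j - 1) + ∑ k ∈ Finset.range j, max (w j k) 0 ∧
    (0 < i →
      opt' w j i = opt' w (j - 1) (i - 1) + ∑ k ∈ Finset.range j, max (w j k) 0
        - ∑ k ∈ Finset.Ico (j - i) j, max (w j k) 0
        + ∑ k ∈ Finset.Ico (j - i) j, max (-w j k) 0) ∧
    opt w j = (Finset.range (j + 1)).inf' Finset.nonempty_range_add_one (fun i => opt' w j i) := by
  have hsucc : ∀ m ≤ j, blockCost w m (j + 1) = blockCost w m j
      + (∑ k ∈ range j, max (w j k) 0 - ∑ k ∈ Ico m j, max (w j k) 0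
        + ∑ k ∈ Ico m j, max (-w j k) 0) := fun m hmj => by
    rw [blockCost_succ w hmj, sum_range_ite_le hmj]
    simp only [hw _ j]
  refine ⟨?_, fun hi => ?_, opt_eq_inf'_opt' w j⟩
  · rw [opt'_eq_optRange_add_blockCost, Nat.sub_zero, hsucc j le_rfl, blockCost_self,
      opt_eq_optRange, Nat.sub_add_cancel hj]
    simp
  · rw [opt'_eq_optRange_add_blockCost, opt'_eq_optRange_add_blockCost, Nat.sub_add_cancel hj,
      show j - 1 - (i - 1) = j - i by omega, hsucc _ (j.sub_le i)]
    ring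

/-- Correctness of the dynamic programming recurrence for optimal consecutive
clustering with a symmetric weight function. -/
theorem dp_recurrence_correct (w : ℕ → ℕ → ℝ) (hw : ∀ a b, w a b = w b a) (j i : ℕ)
    (hj : 1 ≤ j) (hij : i ≤ j) :
    opt' w j 0 = opt w (j - 1) + ∑ k ∈ Finset.range j, max (w j k) 0 ∧
    (0 < i →
      opt' w j i = opt' w (j - 1) (i - 1) + ∑ k ∈ Finset.range j, max (w j k) 0
        - ∑ k ∈ Finset.Ico (j - i) j, max (w j k) 0
        + ∑ k ∈ Finset.Ico (j - i) j, max (-w j k) 0) ∧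
    opt w j = (Finset.range (j + 1)).inf' Finset.nonempty_range_add_one (fun i => opt' w j i) :=
  dp_recurrence_correct_general w hw j i hj
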